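/- For every γ > 0 the DC envelope φ_γ = g^γ − h^γ is differentiable on ℝ^p with gradient ∇φ_γ = (1/γ)(prox_{γh} − prox_{γg}), and ∇φ_γ is Lipschitz continuous with modulus 1/γ. -/

import Mathlib

/-! The prox map of a proper convex function is firmly nonexpansive, by the variational
inequality that characterises the minimiser. Testing the envelope at `x` with the prox point
of `s` and vice versa squeezes `f^γ(x) - f^γ(s) - γ⁻¹⟪s - prox s, x - s⟫` between
`±(2γ)⁻¹‖x - s‖²`, which yields the gradient. The difference of two firmly nonexpansive maps is
nonexpansive, which yields the Lipschitz modulus. -/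

open scoped InnerProductSpace
noncomputable section

/-- `ℝ^p` as a Euclidean space. -/
abbrev Euc (p : ℕ) := EuclideanSpace ℝ (Fin p)

variable {p : ℕ}

/-- `f : ℝ^p → ℝ ∪ {∞}` (modelled with `EReal` values never equal to `-∞`) is proper. -/
def ProperFun (f : Euc p → EReal) : Prop :=
  (∀ x, f x ≠ ⊥) ∧ (∃ x, f x ≠ ⊤)

/-- Convexity for extended-real-valued functions. -/
def ConvexFun (f : Euc p → EReal) : Prop :=
  ∀ x y : Euc p, ∀ t : ℝ, 0 ≤ t → t ≤ 1 →
    f (t • x + (1 - t) • y) ≤ (t : EReal) * f x + ((1 - t : ℝ) : EReal) * f y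

/-- The convex subdifferential `∂f(x)`. -/
def Subdiff (f : Euc p → EReal) (x : Euc p) : Set (Euc p) :=
  {v | ∀ z, f x + ((⟪v, z - x⟫_ℝ : ℝ) : EReal) ≤ f z}

/-- `u` minimizes `w ↦ f(w) + (1/(2γ))‖w − x‖²`. -/
def ProxObjMin (f : Euc p → EReal) (γ : ℝ) (x u : Euc p) : Prop :=
  ∀ w, f u + ((1/(2*γ) * ‖u - x‖^2 : ℝ) : EReal) ≤ f w + ((1/(2*γ) * ‖w - x‖^2 : ℝ) : EReal)

/-- `u = prox_{γf}(x)`: `u` is the unique minimizer of `w ↦ f(w) + (1/(2γ))‖w − x‖²`. -/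
def IsProxOf (f : Euc p → EReal) (γ : ℝ) (x u : Euc p) : Prop :=
  ProxObjMin f γ x u ∧ ∀ w, ProxObjMin f γ x w → w = u

/-- The Moreau envelope `f^γ(x) = inf_w { f(w) + (1/(2γ))‖w − x‖² }`, as an extended real. -/
def moreau (f : Euc p → EReal) (γ : ℝ) (x : Euc p) : EReal :=
  ⨅ w : Euc p, f w + ((1/(2*γ) * ‖w - x‖^2 : ℝ) : EReal)

/-- The (real-valued) Moreau envelope. -/
def moreauR (f : Euc p → EReal) (γ : ℝ) (x : Euc p) : ℝ := (moreau f γ x).toReal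

/-- The DC envelope `φ_γ = g^γ − h^γ`. -/
def dce (g h : Euc p → EReal) (γ : ℝ) (s : Euc p) : ℝ := moreauR g γ s - moreauR h γ s

/-- The DC function `φ = g − h`, with the convention `∞ − ∞ = ∞`. -/
def dcVal (g h : Euc p → EReal) (x : Euc p) : EReal :=
  if g x = ⊤ then ⊤ else g x - h x

open Filter Topology

section InnerProductSpace

variable {E : Type*} [NormedAddCommGroup E] [InnerProductSpace ℝ E]

lemma inner_le_norm_sq_of_norm_sq_le_inner {a d : E} (ha : ‖a‖ ^ 2 ≤ ⟪d, a⟫_ℝ) :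
    ⟪d, a⟫_ℝ ≤ ‖d‖ ^ 2 := by
  have := norm_sub_sq_real d a
  nlinarith [sq_nonneg ‖d - a‖]

lemma norm_sub_le_of_norm_sq_le_inner {a b d : E} (ha : ‖a‖ ^ 2 ≤ ⟪d, a⟫_ℝ)
    (hb : ‖b‖ ^ 2 ≤ ⟪d, b⟫_ℝ) : ‖b - a‖ ≤ ‖d‖ := by
  refine le_of_pow_le_pow_left₀ two_ne_zero (norm_nonneg d) ?_
  have h₁ := norm_sub_sq_real b a
  have h₂ := norm_sub_sq_real d (a + b)
  have h₃ := norm_add_sq_real a b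
  rw [inner_add_right] at h₂
  rw [real_inner_comm a b] at h₁
  nlinarith [sq_nonneg ‖d - (a + b)‖]

lemma hasGradientAt_of_abs_sub_inner_le [CompleteSpace E] {e : E → ℝ} {v s : E} {C : ℝ}
    (hbound : ∀ x, |e x - e s - ⟪v, x - s⟫_ℝ| ≤ C * ‖x - s‖ ^ 2) : HasGradientAt e v s := by
  rw [hasGradientAt_iff_isLittleO]
  refine (Asymptotics.IsBigO.of_bound C (Eventually.of_forall fun x => ?_)).trans_isLittleO
    (Asymptotics.isLittleO_pow_sub_sub s one_lt_two)
  simpa using hbound x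

lemma HasGradientAt.sub [CompleteSpace E] {f g : E → ℝ} {f' g' x : E}
    (hf : HasGradientAt f f' x) (hg : HasGradientAt g g' x) :
    HasGradientAt (fun y => f y - g y) (f' - g') x := by
  rw [hasGradientAt_iff_hasFDerivAt, map_sub]
  exact hf.hasFDerivAt.sub hg.hasFDerivAt

end InnerProductSpace

section Prox

variable {f : Euc p → EReal} {γ : ℝ} {s u : Euc p}

lemma ProperFun.coe_toReal (hf : ProperFun f) {x : Euc p} (hx : f x ≠ ⊤) :
    ((f x).toReal : EReal) = f x :=
  EReal.coe_toReal hx (hf.1 x)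

lemma ConvexFun.le_coe (hconv : ConvexFun f) {x y : Euc p} {a b t : ℝ} (hx : f x = a)
    (hy : f y = b) (ht₀ : 0 ≤ t) (ht₁ : t ≤ 1) :
    f (t • x + (1 - t) • y) ≤ ((t * a + (1 - t) * b : ℝ) : EReal) := by
  have := hconv x y t ht₀ ht₁
  rwa [hx, hy, ← EReal.coe_mul, ← EReal.coe_mul, ← EReal.coe_add] at this

lemma ProxObjMin.ne_top (hf : ProperFun f) (hu : ProxObjMin f γ s u) : f u ≠ ⊤ := by
  obtain ⟨w, hw⟩ := hf.2
  intro htop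
  have := hu w
  rw [htop, EReal.top_add_of_ne_bot (EReal.coe_ne_bot _), top_le_iff] at this
  exact (EReal.add_lt_top hw (EReal.coe_ne_top _)).ne this

lemma ProxObjMin.moreauR_eq (hf : ProperFun f) (hu : ProxObjMin f γ s u) :
    moreauR f γ s = (f u).toReal + 1 / (2 * γ) * ‖u - s‖ ^ 2 := by
  have hmoreau : moreau f γ s = f u + ((1 / (2 * γ) * ‖u - s‖ ^ 2 : ℝ) : EReal) :=
    le_antisymm (iInf_le _ u) (le_iInf hu)
  rw [moreauR, hmoreau, ← hf.coe_toReal (hu.ne_top hf), ← EReal.coe_add, EReal.toReal_coe,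
    EReal.toReal_coe]

lemma ProxObjMin.moreauR_le (hf : ProperFun f) (hu : ProxObjMin f γ s u) {w : Euc p}
    (hw : f w ≠ ⊤) : moreauR f γ s ≤ (f w).toReal + 1 / (2 * γ) * ‖w - s‖ ^ 2 := by
  have := hu w
  rw [← hf.coe_toReal hw, ← hf.coe_toReal (hu.ne_top hf)] at this
  rw [hu.moreauR_eq hf]
  exact_mod_cast this

lemma ProxObjMin.inner_le (hf : ProperFun f) (hconv : ConvexFun f) (hγ : 0 < γ)
    (hu : ProxObjMin f γ s u) {w : Euc p} (hw : f w ≠ ⊤) :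
    ⟪s - u, w - u⟫_ℝ ≤ γ * ((f w).toReal - (f u).toReal) := by
  set A := (f u).toReal
  set B := (f w).toReal
  set I := ⟪u - s, w - u⟫_ℝ
  -- compare `u` with the points `u + t • (w - u)` of the segment towards `w`
  have hsegment : ∀ t : ℝ, 0 < t → t ≤ 1 → γ * (A - B) ≤ I + t / 2 * ‖w - u‖ ^ 2 := by
    intro t ht₀ ht₁
    have hconvt : f (t • w + (1 - t) • u) ≤ ((t * B + (1 - t) * A : ℝ) : EReal) :=
      hconv.le_coe (hf.coe_toReal hw).symm (hf.coe_toReal (hu.ne_top hf)).symm ht₀.le ht₁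
    have hmin := (hu (t • w + (1 - t) • u)).trans (add_le_add_left hconvt _)
    rw [← hf.coe_toReal (hu.ne_top hf)] at hmin
    have hmin' : A + 1 / (2 * γ) * ‖u - s‖ ^ 2
        ≤ t * B + (1 - t) * A + 1 / (2 * γ) * ‖t • w + (1 - t) • u - s‖ ^ 2 := by
      exact_mod_cast hmin
    have hexpand : ‖t • w + (1 - t) • u - s‖ ^ 2
        = ‖u - s‖ ^ 2 + 2 * t * I + t ^ 2 * ‖w - u‖ ^ 2 := by
      rw [show t • w + (1 - t) • u - s = (u - s) + t • (w - u) by module, norm_add_sq_real,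
        real_inner_smul_right, norm_smul, Real.norm_of_nonneg ht₀.le, mul_pow]
      ring
    rw [hexpand] at hmin'
    have := mul_le_mul_of_nonneg_left hmin' hγ.le
    field_simp at this ⊢
    nlinarith
  have hlim : Tendsto (fun t : ℝ => I + t / 2 * ‖w - u‖ ^ 2) (𝓝[>] 0) (𝓝 I) := by
    have hcont : Continuous fun t : ℝ => I + t / 2 * ‖w - u‖ ^ 2 := by fun_prop
    simpa using (hcont.tendsto 0).mono_left nhdsWithin_le_nhds
  have hAB : γ * (A - B) ≤ I := ge_of_tendsto hlim <| by
    filter_upwards [Ioo_mem_nhdsGT one_pos] with t ht using hsegment t ht.1 ht.2.le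
  rw [← neg_sub u s, inner_neg_left]
  linarith

lemma ProxObjMin.norm_sub_sq_le_inner (hf : ProperFun f) (hconv : ConvexFun f) (hγ : 0 < γ)
    {x y v : Euc p} (hu : ProxObjMin f γ x u) (hv : ProxObjMin f γ y v) :
    ‖u - v‖ ^ 2 ≤ ⟪x - y, u - v⟫_ℝ := by
  have h₁ := hu.inner_le hf hconv hγ (hv.ne_top hf)
  have h₂ := hv.inner_le hf hconv hγ (hu.ne_top hf)
  have hsum : ⟪x - y, u - v⟫_ℝ - ‖u - v‖ ^ 2 = -(⟪x - u, v - u⟫_ℝ + ⟪y - v, u - v⟫_ℝ) := by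
    rw [← real_inner_self_eq_norm_sq]
    simp only [inner_sub_left, inner_sub_right, real_inner_comm]
    ring
  linarith

lemma ProxObjMin.moreauR_sub_le (hf : ProperFun f) (hu : ProxObjMin f γ s u) {x ux : Euc p}
    (hx : ProxObjMin f γ x ux) :
    moreauR f γ x - moreauR f γ s ≤ γ⁻¹ * ⟪s - u, x - s⟫_ℝ + 1 / (2 * γ) * ‖x - s‖ ^ 2 := by
  have hle := hx.moreauR_le hf (hu.ne_top hf)
  have hexpand : ‖u - x‖ ^ 2 = ‖u - s‖ ^ 2 + 2 * ⟪s - u, x - s⟫_ℝ + ‖x - s‖ ^ 2 := by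
    rw [show u - x = (u - s) - (x - s) by abel, norm_sub_sq_real, ← neg_sub s u, inner_neg_left]
    ring
  have hcoeff : 1 / (2 * γ) * (2 * ⟪s - u, x - s⟫_ℝ) = γ⁻¹ * ⟪s - u, x - s⟫_ℝ := by ring
  rw [hexpand, mul_add, mul_add, hcoeff] at hle
  rw [hu.moreauR_eq hf]
  linarith

lemma hasGradientAt_moreauR (hf : ProperFun f) (hconv : ConvexFun f) (hγ : 0 < γ)
    {P : Euc p → Euc p} (hP : ∀ x, ProxObjMin f γ x (P x)) (s : Euc p) :
    HasGradientAt (moreauR f γ) (γ⁻¹ • (s - P s)) s := by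
  refine hasGradientAt_of_abs_sub_inner_le (C := 1 / (2 * γ)) fun x => ?_
  have hup := (hP s).moreauR_sub_le hf (hP x)
  have hlow := (hP x).moreauR_sub_le hf (hP s)
  have hmono : ⟪x - s, P x - P s⟫_ℝ ≤ ‖x - s‖ ^ 2 :=
    inner_le_norm_sq_of_norm_sq_le_inner ((hP x).norm_sub_sq_le_inner hf hconv hγ (hP s))
  have hsplit : ⟪x - P x, s - x⟫_ℝ
      = -‖x - s‖ ^ 2 - ⟪s - P s, x - s⟫_ℝ + ⟪x - s, P x - P s⟫_ℝ := by
    rw [show x - P x = (x - s) + (s - P s) - (P x - P s) by abel, ← neg_sub x s,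
      ← real_inner_self_eq_norm_sq]
    simp only [inner_neg_right, inner_add_left, inner_sub_left, inner_sub_right, real_inner_comm]
    ring
  have hgap := mul_nonneg (inv_nonneg.2 hγ.le) (sub_nonneg.2 hmono)
  rw [hsplit, norm_sub_rev s x] at hlow
  rw [real_inner_smul_left, abs_le]
  constructor <;> linarith

lemma lipschitzWith_one_sub_prox {g h : Euc p → EReal} (hg : ProperFun g) (hgc : ConvexFun g)
    (hh : ProperFun h) (hhc : ConvexFun h) (hγ : 0 < γ) {Pg Ph : Euc p → Euc p}
    (hPg : ∀ x, ProxObjMin g γ x (Pg x)) (hPh : ∀ x, ProxObjMin h γ x (Ph x)) :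
    LipschitzWith 1 fun x => Ph x - Pg x :=
  LipschitzWith.of_dist_le_mul fun x y => by
    rw [NNReal.coe_one, one_mul, dist_eq_norm, dist_eq_norm, sub_sub_sub_comm]
    exact norm_sub_le_of_norm_sq_le_inner ((hPg x).norm_sub_sq_le_inner hg hgc hγ (hPg y))
      ((hPh x).norm_sub_sq_le_inner hh hhc hγ (hPh y))

end Prox

theorem statement2
    (g h : Euc p → EReal)
    (hg_proper : ProperFun g) (hg_convex : ConvexFun g)
    (hh_proper : ProperFun h) (hh_convex : ConvexFun h)
    (γ : ℝ) (hγ : 0 < γ)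
    (proxg proxh : Euc p → Euc p)
    (hproxg : ∀ s, IsProxOf g γ s (proxg s)) (hproxh : ∀ s, IsProxOf h γ s (proxh s)) :
    (∀ s : Euc p, HasGradientAt (dce g h γ) (γ⁻¹ • (proxh s - proxg s)) s) ∧
      LipschitzWith (Real.toNNReal γ⁻¹) (fun s => γ⁻¹ • (proxh s - proxg s)) := by
  have hming s := (hproxg s).1
  have hminh s := (hproxh s).1
  refine ⟨fun s => ?_, ?_⟩
  · have hdiff := (hasGradientAt_moreauR hg_proper hg_convex hγ hming s).sub
      (hasGradientAt_moreauR hh_proper hh_convex hγ hminh s)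
    rwa [← smul_sub, sub_sub_sub_cancel_left] at hdiff
  · have hscaled := (lipschitzWith_smul γ⁻¹).comp
      (lipschitzWith_one_sub_prox hg_proper hg_convex hh_proper hh_convex hγ hming hminh)
    rwa [mul_one, Real.nnnorm_of_nonneg (inv_nonneg.2 hγ.le),
      ← Real.toNNReal_of_nonneg] at hscaled
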